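/- Let d = 2ℓ^a be twice an odd prime power (with d > 2), and let p be an odd integer coprime to ℓ. Then the cyclic subgroup ⟨p⟩ of (ℤ/dℤ)ˣ is balanced if and only if -1 ∈ ⟨p⟩. -/

import Mathlib

/-- A subgroup `H` of `(ℤ/dℤ)ˣ` is *balanced* if every coset of `H` meets the set of
units with least positive residue in `(0, d/2)` and the set of units with least positive
residue in `(d/2, d)` in sets of the same cardinality. -/
def IsBalanced (d : ℕ) (H : Subgroup (ZMod d)ˣ) : Prop :=
  ∀ g : (ZMod d)ˣ,
    {x : (ZMod d)ˣ | (∃ h ∈ H, x = g * h) ∧ 2 * ((x : ZMod d)).val < d}.ncard =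
    {x : (ZMod d)ˣ | (∃ h ∈ H, x = g * h) ∧ d < 2 * ((x : ZMod d)).val}.ncard

/-!
If `-1 ∈ H`, negation permutes each coset of `H` and swaps the residues below and above `d/2`,
so `H` is balanced. Conversely, for `d ≠ 2` no unit has residue exactly `d/2`, so balancing the
coset `H` itself forces `|H|` to be even; by Cauchy `H` then contains an element of order `2`,
which must be `-1` because `(ℤ/2ℓ^aℤ)ˣ` is cyclic.
-/

open Pointwise

theorem IsCyclic.eq_of_orderOf_eq_two {G : Type*} [Group G] [Finite G] [IsCyclic G] {x y : G}
    (hx : orderOf x = 2) (hy : orderOf y = 2) : x = y := by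
  classical
  have : Fintype G := Fintype.ofFinite G
  have h2 : 2 ∣ Fintype.card G := hx ▸ orderOf_dvd_card
  have hcard := IsCyclic.card_orderOf_eq_totient h2
  rw [Nat.totient_two] at hcard
  exact Finset.card_le_one.mp hcard.le x (by simpa using hx) y (by simpa using hy)

theorem IsCyclic.mem_of_orderOf_eq_two {G : Type*} [Group G] [Finite G] [IsCyclic G] {x : G}
    (hx : orderOf x = 2) {H : Subgroup G} (hH : Even (Nat.card H)) : x ∈ H := by
  have : Fact (Nat.Prime 2) := ⟨Nat.prime_two⟩
  obtain ⟨y, hy⟩ := exists_prime_orderOf_dvd_card' 2 (even_iff_two_dvd.mp hH)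
  rw [← Subgroup.orderOf_coe] at hy
  exact IsCyclic.eq_of_orderOf_eq_two hy hx ▸ y.2

namespace ZMod

theorem orderOf_units_neg_one {n : ℕ} (hn : 2 < n) : orderOf (-1 : (ZMod n)ˣ) = 2 := by
  have : Fact (1 < n) := ⟨by omega⟩
  rw [← orderOf_units, Units.val_neg, Units.val_one, orderOf_neg_one, ringChar_zmod_n,
    if_neg hn.ne']

theorem two_mul_val_units_ne {n : ℕ} (hn : n ≠ 2) (x : (ZMod n)ˣ) : 2 * (x : ZMod n).val ≠ n := by
  intro h
  have := (val_coe_unit_coprime x).eq_one_of_dvd (Dvd.intro_left 2 h)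
  omega

theorem val_neg_units {n : ℕ} [Fact (1 < n)] (x : (ZMod n)ˣ) :
    ((-x : (ZMod n)ˣ) : ZMod n).val = n - (x : ZMod n).val := by
  rw [Units.val_neg, neg_val, if_neg x.ne_zero]

end ZMod

section Balanced

variable {d : ℕ} {H : Subgroup (ZMod d)ˣ}

theorem isBalanced_of_neg_one_mem [Fact (1 < d)] (hH : -1 ∈ H) : IsBalanced d H := by
  intro g
  have neg_mem_coset {x : (ZMod d)ˣ} (hx : ∃ h ∈ H, x = g * h) : ∃ h ∈ H, -x = g * h := by
    obtain ⟨h, hh, rfl⟩ := hx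
    exact ⟨-1 * h, H.mul_mem hH hh, by rw [neg_one_mul, mul_neg]⟩
  suffices {x : (ZMod d)ˣ | (∃ h ∈ H, x = g * h) ∧ d < 2 * (x : ZMod d).val} =
      -{x : (ZMod d)ˣ | (∃ h ∈ H, x = g * h) ∧ 2 * (x : ZMod d).val < d} by
    rw [this, Set.ncard_neg]
  ext x
  have hx_lt : (x : ZMod d).val < d := ZMod.val_lt _
  have hx_pos : (x : ZMod d).val ≠ 0 := (ZMod.val_ne_zero _).mpr x.ne_zero
  simp only [Set.mem_neg, Set.mem_ofPred_eq, ZMod.val_neg_units]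
  constructor
  · rintro ⟨hx, hval⟩
    exact ⟨neg_mem_coset hx, by omega⟩
  · rintro ⟨hx, hval⟩
    exact ⟨neg_neg x ▸ neg_mem_coset hx, by omega⟩

theorem IsBalanced.even_card [NeZero d] (hd : d ≠ 2) (hH : IsBalanced d H) :
    Even (Nat.card H) := by
  set lower := {x : (ZMod d)ˣ | (∃ h ∈ H, x = 1 * h) ∧ 2 * (x : ZMod d).val < d}
  set upper := {x : (ZMod d)ˣ | (∃ h ∈ H, x = 1 * h) ∧ d < 2 * (x : ZMod d).val}
  have hsplit : (H : Set (ZMod d)ˣ) = lower ∪ upper := by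
    ext x
    have := ZMod.two_mul_val_units_ne hd x
    simp only [lower, upper, Set.mem_union, Set.mem_ofPred_eq, SetLike.mem_coe, one_mul,
      exists_eq_right', ← and_or_left, iff_self_and]
    exact fun _ ↦ this.lt_or_gt
  have hdisj : Disjoint lower upper :=
    Set.disjoint_left.mpr fun _ hl hu ↦ by have := hl.2; have := hu.2; omega
  rw [← SetLike.coe_sort_coe, Nat.card_coe_set_eq, hsplit, Set.ncard_union_eq hdisj, ← hH 1]
  exact ⟨_, rfl⟩

end Balanced

theorem balanced_iff_neg_one_mem_of_twice_odd_prime_pow_general (ℓ a p : ℕ) (hℓ : ℓ.Prime)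
    (hodd : Odd ℓ) (hd : 2 < 2 * ℓ ^ a)
    (hp : Nat.Coprime p (2 * ℓ ^ a)) :
    IsBalanced (2 * ℓ ^ a) (Subgroup.zpowers (ZMod.unitOfCoprime p hp)) ↔
      (-1 : (ZMod (2 * ℓ ^ a))ˣ) ∈ Subgroup.zpowers (ZMod.unitOfCoprime p hp) := by
  have : Fact (1 < 2 * ℓ ^ a) := ⟨by omega⟩
  have hℓ2 : ℓ ≠ 2 := by rintro rfl; exact Nat.not_odd_iff_even.mpr even_two hodd
  have : IsCyclic (ZMod (2 * ℓ ^ a))ˣ := (ZMod.isCyclic_units_two_mul_iff_of_odd _ hodd.pow).mpr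
    (ZMod.isCyclic_units_of_prime_pow ℓ hℓ hℓ2 a)
  exact ⟨fun hbal ↦ IsCyclic.mem_of_orderOf_eq_two (ZMod.orderOf_units_neg_one hd)
    (hbal.even_card hd.ne'), isBalanced_of_neg_one_mem⟩

theorem balanced_iff_neg_one_mem_of_twice_odd_prime_pow (ℓ a p : ℕ) (hℓ : ℓ.Prime)
    (hodd : Odd ℓ) (ha : 1 ≤ a) (hd : 2 < 2 * ℓ ^ a) (hpodd : Odd p)
    (hpl : Nat.Coprime p ℓ) (hp : Nat.Coprime p (2 * ℓ ^ a)) :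
    IsBalanced (2 * ℓ ^ a) (Subgroup.zpowers (ZMod.unitOfCoprime p hp)) ↔
      (-1 : (ZMod (2 * ℓ ^ a))ˣ) ∈ Subgroup.zpowers (ZMod.unitOfCoprime p hp) :=
  balanced_iff_neg_one_mem_of_twice_odd_prime_pow_general ℓ a p hℓ hodd hd hp
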